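/- Let (M, Σ_M, μ_M) be a measure space, (N, d_N) a complete metric space, h : M → N strongly measurable, and p ∈ (1,∞). Let c : [a,b] → L^p_h(M,N) be a constant speed geodesic with respect to D_p, i.e., D_p(c(s), c(t)) = (|t−s|/(b−a)) · D_p(c(a), c(b)) for all s, t ∈ [a,b]. Then there exists a Borel measurable ĉ : [a,b]×M → N with separable range such that for every t ∈ [a,b], ĉ(t,·) is a representative of c(t) and, for μ_M-a.e. x ∈ M, the curve t ↦ ĉ(t,x) is a constant speed geodesic in N: d_N(ĉ(s,x), ĉ(t,x)) = (|t−s|/(b−a)) · d_N(ĉ(a,x), ĉ(b,x)) for all s, t ∈ [a,b]. -/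

import Mathlib

/-! Equality in Minkowski's inequality for `1 < p` forces proportionality: if `χ ≤ φ + ψ`
pointwise and `‖χ‖_p = ‖φ‖_p + ‖ψ‖_p`, then `χ = φ + ψ` a.e. and, by strict convexity of
`r ↦ r ^ p`, `‖ψ‖_p φ = ‖φ‖_p ψ` a.e. Along a `D_p`-geodesic the triangle inequality for `D_p` is
an equality on ordered triples, so for each pair `s, t`, a.e.
`d(c_s x, c_t x) = |t - s| / (b - a) · d(c_a x, c_b x)`. Off a null set this holds at all dyadic
times at once, so `t ↦ c_t x` is Lipschitz there; by completeness of `N` the dyadic step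
approximations `c_{t_n}(x)`, jointly measurable in `(t, x)`, converge to the required `ĉ(t, x)`. -/

set_option linter.unusedSectionVars false

open MeasureTheory ENNReal Set Filter Topology TopologicalSpace

noncomputable section

namespace NLS

variable {α : Type*} [MeasurableSpace α] {N : Type*} [MetricSpace N]
  [MeasurableSpace N] [BorelSpace N]

/-- "Strongly measurable": Borel measurable with separable range. -/
def SM (f : α → N) : Prop :=
  Measurable f ∧ TopologicalSpace.IsSeparable (Set.range f)

theorem SM.aesm {f : α → N} (hf : SM f) (μ : Measure α) :
    AEStronglyMeasurable f μ :=
  (stronglyMeasurable_iff_measurable_separable.2 ⟨hf.1, hf.2⟩).aestronglyMeasurable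

/-- The `L^p` (extended) distance between two maps with values in a metric space;
for `p < ∞` it is `(∫ d(f x, g x)^p dμ)^{1/p}` and for `p = ∞` the essential supremum
of `x ↦ d(f x, g x)`. -/
def Dp (μ : Measure α) (p : ℝ≥0∞) (f g : α → N) : ℝ≥0∞ :=
  eLpNorm (fun x => dist (f x) (g x)) p μ

theorem Dp_self (μ : Measure α) (p : ℝ≥0∞) (f : α → N) : Dp μ p f f = 0 := by
  unfold Dp
  simp only [dist_self]
  exact eLpNorm_zero'

theorem Dp_comm (μ : Measure α) (p : ℝ≥0∞) (f g : α → N) : Dp μ p f g = Dp μ p g f := by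
  unfold Dp
  simp only [dist_comm]

theorem Dp_triangle {μ : Measure α} {p : ℝ≥0∞} (hp : 1 ≤ p) {f g k : α → N}
    (hf : AEStronglyMeasurable f μ) (hg : AEStronglyMeasurable g μ)
    (hk : AEStronglyMeasurable k μ) :
    Dp μ p f k ≤ Dp μ p f g + Dp μ p g k := by
  have h1 : Dp μ p f k ≤
      eLpNorm ((fun x => dist (f x) (g x)) + fun x => dist (g x) (k x)) p μ := by
    refine eLpNorm_mono fun x => ?_
    simp only [Pi.add_apply, Real.norm_eq_abs]
    rw [abs_of_nonneg dist_nonneg]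
    exact (dist_triangle (f x) (g x) (k x)).trans (le_abs_self _)
  exact h1.trans (eLpNorm_add_le (hf.dist hg) (hg.dist hk) hp)

/-- The nonlinear Lebesgue space `L^p_h(α, N)` with base map `h`, presented by
representatives: Borel measurable, separably valued maps at finite `D_p`-distance
from `h`.  Two representatives at `D_p`-distance `0` (equivalently, `μ`-a.e. equal)
represent the same element of the quotient nonlinear Lebesgue space; accordingly the
canonical structure below is a pseudometric space whose metric (separation) quotient is
the actual nonlinear Lebesgue space.  All topological and Borel-measurability notions for
the quotient correspond exactly to those of this pseudometric space. -/
def NLp (μ : Measure α) (h : α → N) (_hh : SM h) (p : ℝ≥0∞) : Type _ :=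
  {f : α → N // SM f ∧ Dp μ p f h ≠ ∞}

namespace NLp

variable {μ : Measure α} {h : α → N} {hh : SM h} {p : ℝ≥0∞}

def pem (μ : Measure α) (h : α → N) (hh : SM h) (p : ℝ≥0∞) (hp : 1 ≤ p) :
    PseudoEMetricSpace (NLp μ h hh p) where
  edist f g := Dp μ p f.1 g.1
  edist_self f := Dp_self μ p f.1
  edist_comm f g := Dp_comm μ p f.1 g.1
  edist_triangle f g k := Dp_triangle hp (f.2.1.aesm μ) (g.2.1.aesm μ) (k.2.1.aesm μ)

theorem dp_ne_top (hp : 1 ≤ p) (f g : NLp μ h hh p) : Dp μ p f.1 g.1 ≠ ∞ := by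
  have htri := Dp_triangle hp (f.2.1.aesm μ) (hh.aesm μ) (g.2.1.aesm μ)
  have h2 : Dp μ p h g.1 ≠ ∞ := by rw [Dp_comm]; exact g.2.2
  exact ne_top_of_le_ne_top (ENNReal.add_ne_top.2 ⟨f.2.2, h2⟩) htri

/-- The `D_p` pseudometric on the nonlinear Lebesgue space. -/
instance [hp : Fact (1 ≤ p)] : PseudoMetricSpace (NLp μ h hh p) :=
  @PseudoEMetricSpace.toPseudoMetricSpace _ (pem μ h hh p hp.out)
    (fun f g => dp_ne_top hp.out f g)

instance [Fact (1 ≤ p)] : MeasurableSpace (NLp μ h hh p) := borel _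
instance [Fact (1 ≤ p)] : BorelSpace (NLp μ h hh p) := ⟨rfl⟩

theorem edist_def [Fact (1 ≤ p)] (f g : NLp μ h hh p) :
    edist f g = Dp μ p f.1 g.1 := rfl

theorem dist_def [Fact (1 ≤ p)] (f g : NLp μ h hh p) :
    dist f g = (Dp μ p f.1 g.1).toReal := rfl

end NLp

/-- Absolutely continuous curves: `c ∈ AC^p([a,b], X)`. -/
def MemACp {X : Type*} [PseudoMetricSpace X] (p : ℝ≥0∞) (a b : ℝ) (c : ℝ → X) : Prop :=
  ∃ m : ℝ → ℝ, MemLp m p (volume.restrict (Set.Icc a b)) ∧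
    ∀ s t : ℝ, a ≤ s → s ≤ t → t ≤ b → dist (c s) (c t) ≤ ∫ r in s..t, m r

/-- The metric derivative of a curve at `t` (limit of difference quotients within `[a,b]`). -/
def mder {X : Type*} [PseudoMetricSpace X] (a b : ℝ) (c : ℝ → X) (t : ℝ) : ℝ :=
  limUnder (𝓝[Set.Icc a b \ {t}] t) fun s => dist (c s) (c t) / |s - t|

section MinkowskiEquality

variable {μ : Measure α} {p : ℝ}

theorem lintegral_ofReal_rpow_eq_eLpNorm_rpow (hp : 0 < p) {φ : α → ℝ} (hφ : ∀ x, 0 ≤ φ x) :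
    ∫⁻ x, ENNReal.ofReal (φ x ^ p) ∂μ = eLpNorm φ (ENNReal.ofReal p) μ ^ p := by
  have hp' : ENNReal.ofReal p ≠ 0 := by simpa using hp
  rw [eLpNorm_eq_eLpNorm' hp' ofReal_ne_top, toReal_ofReal hp.le,
    ← lintegral_rpow_enorm_eq_rpow_eLpNorm' hp]
  congr 1 with x
  rw [Real.enorm_eq_ofReal (hφ x), ENNReal.ofReal_rpow_of_nonneg (hφ x) hp.le]

theorem lintegral_ofReal_div_rpow_eq_one (hp : 0 < p) {φ : α → ℝ} (hφ : ∀ x, 0 ≤ φ x)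
    {A : ℝ} (hA : 0 < A) (hφA : eLpNorm φ (ENNReal.ofReal p) μ = ENNReal.ofReal A) :
    ∫⁻ x, ENNReal.ofReal ((φ x / A) ^ p) ∂μ = 1 := by
  have hnorm : eLpNorm (fun x => φ x / A) (ENNReal.ofReal p) μ = 1 := by
    simp_rw [div_eq_inv_mul]
    rw [show (fun x => A⁻¹ * φ x) = A⁻¹ • φ from rfl, eLpNorm_const_smul, hφA,
      Real.enorm_eq_ofReal (inv_nonneg.2 hA.le), ← ENNReal.ofReal_mul (inv_nonneg.2 hA.le),
      inv_mul_cancel₀ hA.ne', ENNReal.ofReal_one]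
  rw [lintegral_ofReal_rpow_eq_eLpNorm_rpow hp fun x => div_nonneg (hφ x) hA.le, hnorm,
    ENNReal.one_rpow]

theorem ae_eq_of_le_of_eLpNorm_le (hp : 0 < p) {χ g : α → ℝ} (hg : AEMeasurable g μ)
    (hχ : ∀ x, 0 ≤ χ x) (hχg : ∀ x, χ x ≤ g x)
    (hnorm : eLpNorm g (ENNReal.ofReal p) μ ≤ eLpNorm χ (ENNReal.ofReal p) μ)
    (hfin : eLpNorm χ (ENNReal.ofReal p) μ ≠ ∞) : χ =ᵐ[μ] g := by
  have hg0 : ∀ x, 0 ≤ g x := fun x => (hχ x).trans (hχg x)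
  have hpow := ae_eq_of_ae_le_of_lintegral_le
    (ae_of_all _ fun x => ENNReal.ofReal_le_ofReal (Real.rpow_le_rpow (hχ x) (hχg x) hp.le))
    (by rw [lintegral_ofReal_rpow_eq_eLpNorm_rpow hp hχ]; exact rpow_ne_top_of_nonneg hp.le hfin)
    (hg.pow_const p).ennreal_ofReal
    (by
      rw [lintegral_ofReal_rpow_eq_eLpNorm_rpow hp hχ, lintegral_ofReal_rpow_eq_eLpNorm_rpow hp hg0]
      gcongr)
  filter_upwards [hpow] with x hx
  rwa [ENNReal.ofReal_eq_ofReal_iff (Real.rpow_nonneg (hχ x) p) (Real.rpow_nonneg (hg0 x) p),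
    Real.rpow_left_inj (hχ x) (hg0 x) hp.ne'] at hx

theorem ae_div_eq_div_of_eLpNorm_add_eq (hp : 1 < p) {φ ψ : α → ℝ}
    (hφ : Measurable φ) (hψ : Measurable ψ) (hφ0 : ∀ x, 0 ≤ φ x) (hψ0 : ∀ x, 0 ≤ ψ x)
    {A B : ℝ} (hA : 0 < A) (hB : 0 < B)
    (hφA : eLpNorm φ (ENNReal.ofReal p) μ = ENNReal.ofReal A)
    (hψB : eLpNorm ψ (ENNReal.ofReal p) μ = ENNReal.ofReal B)
    (hsum : eLpNorm (φ + ψ) (ENNReal.ofReal p) μ = ENNReal.ofReal (A + B)) :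
    ∀ᵐ x ∂μ, φ x / A = ψ x / B := by
  -- `(φ + ψ) / (A + B)` is a convex combination of `φ / A` and `ψ / B`, and all three have unit
  -- `p`-th power integral; so the convexity inequality for `r ^ p` is an a.e. equality.
  have hp0 : 0 < p := one_pos.trans hp
  set l := A / (A + B)
  have hl0 : 0 < l := div_pos hA (add_pos hA hB)
  have hl1 : 0 < 1 - l := by rw [sub_pos, div_lt_one (add_pos hA hB)]; linarith
  have hmix : ∀ x, (φ x + ψ x) / (A + B) = l * (φ x / A) + (1 - l) * (ψ x / B) := by
    intro x; simp only [l]; field_simp; ring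
  have hu0 : ∀ x, 0 ≤ φ x / A := fun x => div_nonneg (hφ0 x) hA.le
  have hv0 : ∀ x, 0 ≤ ψ x / B := fun x => div_nonneg (hψ0 x) hB.le
  set F : α → ℝ≥0∞ := fun x => ENNReal.ofReal (((φ x + ψ x) / (A + B)) ^ p)
  set G : α → ℝ≥0∞ := fun x => ENNReal.ofReal (l * (φ x / A) ^ p + (1 - l) * (ψ x / B) ^ p)
  have hF : ∫⁻ x, F x ∂μ = 1 :=
    lintegral_ofReal_div_rpow_eq_one hp0 (fun x => add_nonneg (hφ0 x) (hψ0 x))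
      (add_pos hA hB) hsum
  have hG : ∫⁻ x, G x ∂μ = 1 := by
    have hsplit : G = fun x => ENNReal.ofReal l * ENNReal.ofReal ((φ x / A) ^ p)
        + ENNReal.ofReal (1 - l) * ENNReal.ofReal ((ψ x / B) ^ p) := by
      ext x
      rw [show G x = ENNReal.ofReal _ from rfl,
        ENNReal.ofReal_add (mul_nonneg hl0.le (Real.rpow_nonneg (hu0 x) p))
          (mul_nonneg hl1.le (Real.rpow_nonneg (hv0 x) p)), ENNReal.ofReal_mul hl0.le,
        ENNReal.ofReal_mul hl1.le]
    rw [hsplit, lintegral_add_left (((hφ.div_const A).pow_const p).ennreal_ofReal.const_mul _),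
      lintegral_const_mul' _ _ ofReal_ne_top, lintegral_const_mul' _ _ ofReal_ne_top,
      lintegral_ofReal_div_rpow_eq_one hp0 hφ0 hA hφA,
      lintegral_ofReal_div_rpow_eq_one hp0 hψ0 hB hψB, mul_one, mul_one,
      ← ENNReal.ofReal_add hl0.le hl1.le, add_sub_cancel, ENNReal.ofReal_one]
  have hFG : F =ᵐ[μ] G := by
    refine ae_eq_of_ae_le_of_lintegral_le (ae_of_all _ fun x => ?_) (by rw [hF]; exact one_ne_top)
      (((((hφ.div_const A).pow_const p).const_mul l).add
        (((hψ.div_const B).pow_const p).const_mul (1 - l))).ennreal_ofReal.aemeasurable)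
      (by rw [hF, hG])
    refine ENNReal.ofReal_le_ofReal ?_
    rw [hmix]
    simpa using (convexOn_rpow hp.le).2 (hu0 x) (hv0 x) hl0.le hl1.le (by ring)
  filter_upwards [hFG] with x hx
  by_contra hne
  refine ((strictConvexOn_rpow hp).2 (hu0 x) (hv0 x) hne hl0 hl1 (by ring)).ne ?_
  rw [ENNReal.ofReal_eq_ofReal_iff (Real.rpow_nonneg (div_nonneg (add_nonneg (hφ0 x) (hψ0 x))
    (add_pos hA hB).le) p) (add_nonneg (mul_nonneg hl0.le (Real.rpow_nonneg (hu0 x) p))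
    (mul_nonneg hl1.le (Real.rpow_nonneg (hv0 x) p))), hmix] at hx
  simpa using hx

theorem ae_mul_eq_mul_of_eLpNorm_add_eq (hp : 1 < p) {φ ψ : α → ℝ}
    (hφ : Measurable φ) (hψ : Measurable ψ) (hφ0 : ∀ x, 0 ≤ φ x) (hψ0 : ∀ x, 0 ≤ ψ x)
    {A B : ℝ} (hA : 0 ≤ A) (hB : 0 ≤ B)
    (hφA : eLpNorm φ (ENNReal.ofReal p) μ = ENNReal.ofReal A)
    (hψB : eLpNorm ψ (ENNReal.ofReal p) μ = ENNReal.ofReal B)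
    (hsum : eLpNorm (φ + ψ) (ENNReal.ofReal p) μ = ENNReal.ofReal (A + B)) :
    ∀ᵐ x ∂μ, B * φ x = A * ψ x := by
  have hp0 : ENNReal.ofReal p ≠ 0 := by simpa using one_pos.trans hp
  rcases hA.eq_or_lt with rfl | hA
  · rw [ENNReal.ofReal_zero, eLpNorm_eq_zero_iff hφ.aestronglyMeasurable hp0] at hφA
    filter_upwards [hφA] with x hx
    simp [hx]
  rcases hB.eq_or_lt with rfl | hB
  · rw [ENNReal.ofReal_zero, eLpNorm_eq_zero_iff hψ.aestronglyMeasurable hp0] at hψB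
    filter_upwards [hψB] with x hx
    simp [hx]
  filter_upwards [ae_div_eq_div_of_eLpNorm_add_eq hp hφ hψ hφ0 hψ0 hA hB hφA hψB hsum] with x hx
  rw [div_eq_div_iff hA.ne' hB.ne'] at hx
  linarith

theorem ae_mul_eq_mul_of_le_add_of_eLpNorm_eq_add (hp : 1 < p) {φ ψ χ : α → ℝ}
    (hφ : Measurable φ) (hψ : Measurable ψ) (hφ0 : ∀ x, 0 ≤ φ x) (hψ0 : ∀ x, 0 ≤ ψ x)
    (hχ0 : ∀ x, 0 ≤ χ x) (hχ : ∀ x, χ x ≤ φ x + ψ x) {A B : ℝ} (hA : 0 ≤ A) (hB : 0 ≤ B)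
    (hφA : eLpNorm φ (ENNReal.ofReal p) μ = ENNReal.ofReal A)
    (hψB : eLpNorm ψ (ENNReal.ofReal p) μ = ENNReal.ofReal B)
    (hχAB : eLpNorm χ (ENNReal.ofReal p) μ = ENNReal.ofReal (A + B)) :
    ∀ᵐ x ∂μ, (A + B) * φ x = A * χ x := by
  have hsum_le : eLpNorm (φ + ψ) (ENNReal.ofReal p) μ ≤ ENNReal.ofReal (A + B) := by
    refine (eLpNorm_add_le hφ.aestronglyMeasurable hψ.aestronglyMeasurable ?_).trans_eq ?_
    · exact ENNReal.one_le_ofReal.2 hp.le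
    · rw [hφA, hψB, ENNReal.ofReal_add hA hB]
  have hχ_eq : χ =ᵐ[μ] φ + ψ :=
    ae_eq_of_le_of_eLpNorm_le (one_pos.trans hp) (hφ.add hψ).aemeasurable hχ0 hχ
      (hsum_le.trans hχAB.ge) (hχAB ▸ ofReal_ne_top)
  have hsum : eLpNorm (φ + ψ) (ENNReal.ofReal p) μ = ENNReal.ofReal (A + B) :=
    (eLpNorm_congr_ae hχ_eq).symm.trans hχAB
  filter_upwards [hχ_eq, ae_mul_eq_mul_of_eLpNorm_add_eq hp hφ hψ hφ0 hψ0 hA hB hφA hψB hsum]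
    with x hχx hx
  rw [hχx, Pi.add_apply]
  linarith

end MinkowskiEquality

def IsConstSpeedGeodesicOn {X : Type*} [PseudoMetricSpace X] (a b : ℝ) (c : ℝ → X) : Prop :=
  ∀ s ∈ Icc a b, ∀ t ∈ Icc a b, dist (c s) (c t) = |t - s| / (b - a) * dist (c a) (c b)

theorem IsConstSpeedGeodesicOn.dist_add_dist_eq {X : Type*} [PseudoMetricSpace X] {a b : ℝ}
    {c : ℝ → X} (hc : IsConstSpeedGeodesicOn a b c) {s u t : ℝ} (has : a ≤ s) (hsu : s ≤ u)
    (hut : u ≤ t) (htb : t ≤ b) :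
    dist (c s) (c u) + dist (c u) (c t) = dist (c s) (c t) := by
  rw [hc s ⟨has, by linarith⟩ u ⟨by linarith, by linarith⟩, hc u ⟨by linarith, by linarith⟩ t
    ⟨by linarith, htb⟩, hc s ⟨has, by linarith⟩ t ⟨by linarith, htb⟩,
    abs_of_nonneg (sub_nonneg.2 hsu), abs_of_nonneg (sub_nonneg.2 hut),
    abs_of_nonneg (sub_nonneg.2 (hsu.trans hut))]
  ring

namespace NLp

variable {μ : Measure α} {h : α → N} {hh : SM h}

theorem stronglyMeasurable {q : ℝ≥0∞} (f : NLp μ h hh q) : StronglyMeasurable f.1 :=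
  stronglyMeasurable_iff_measurable_separable.2 f.2.1

theorem measurable_dist {q : ℝ≥0∞} (f g : NLp μ h hh q) :
    Measurable fun x => dist (f.1 x) (g.1 x) :=
  (f.stronglyMeasurable.dist g.stronglyMeasurable).measurable

theorem eLpNorm_dist_eq {q : ℝ≥0∞} [Fact (1 ≤ q)] (f g : NLp μ h hh q) :
    eLpNorm (fun x => dist (f.1 x) (g.1 x)) q μ = ENNReal.ofReal (dist f g) := by
  rw [dist_def, ofReal_toReal (dp_ne_top Fact.out f g)]
  rfl

theorem ae_eq_of_dist_eq_zero {q : ℝ≥0∞} [hq : Fact (1 ≤ q)] {f g : NLp μ h hh q}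
    (hfg : dist f g = 0) : f.1 =ᵐ[μ] g.1 := by
  have hzero := eLpNorm_dist_eq f g
  rw [hfg, ENNReal.ofReal_zero, eLpNorm_eq_zero_iff (measurable_dist f g).aestronglyMeasurable
    (one_pos.trans_le hq.out).ne'] at hzero
  filter_upwards [hzero] with x hx
  exact dist_eq_zero.1 hx

theorem ae_dist_mul_eq_of_dist_add_eq {p : ℝ} (hp : 1 < p) [Fact (1 ≤ ENNReal.ofReal p)]
    {f g k : NLp μ h hh (ENNReal.ofReal p)} (hfgk : dist f g + dist g k = dist f k) :
    ∀ᵐ x ∂μ, dist f k * dist (f.1 x) (g.1 x) = dist f g * dist (f.1 x) (k.1 x) := by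
  have hfk := eLpNorm_dist_eq f k
  rw [← hfgk] at hfk ⊢
  exact ae_mul_eq_mul_of_le_add_of_eLpNorm_eq_add hp (measurable_dist f g) (measurable_dist g k)
    (fun _ => dist_nonneg) (fun _ => dist_nonneg) (fun _ => dist_nonneg)
    (fun _ => dist_triangle _ _ _) dist_nonneg dist_nonneg (eLpNorm_dist_eq f g)
    (eLpNorm_dist_eq g k) hfk

theorem ae_dist_eq_of_isConstSpeedGeodesicOn {p : ℝ} (hp : 1 < p) [Fact (1 ≤ ENNReal.ofReal p)]
    {a b : ℝ} (hab : a < b) {c : ℝ → NLp μ h hh (ENNReal.ofReal p)}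
    (hc : IsConstSpeedGeodesicOn a b c) {s t : ℝ} (hs : s ∈ Icc a b) (ht : t ∈ Icc a b) :
    ∀ᵐ x ∂μ, dist ((c s).1 x) ((c t).1 x)
      = |t - s| / (b - a) * dist ((c a).1 x) ((c b).1 x) := by
  wlog hst : s ≤ t generalizing s t
  · filter_upwards [this ht hs (le_of_not_ge hst)] with x hx
    rw [dist_comm, hx, abs_sub_comm]
  rcases (dist_nonneg (x := c a) (y := c b)).eq_or_lt with hL | hL
  · have hst0 : dist (c s) (c t) = 0 := by rw [hc s hs t ht, ← hL, mul_zero]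
    filter_upwards [ae_eq_of_dist_eq_zero hst0, ae_eq_of_dist_eq_zero hL.symm] with x hxst hxab
    rw [hxst, hxab, dist_self, dist_self, mul_zero]
  rcases (hs.1.trans hst).eq_or_lt with rfl | hat
  · rw [le_antisymm hst hs.1]
    exact ae_of_all _ fun x => by simp
  -- transfer proportionality along the aligned triples `a, t, b` and `t, s, a`
  have hatb := ae_dist_mul_eq_of_dist_add_eq hp (hc.dist_add_dist_eq le_rfl hat.le ht.2 le_rfl)
  have htsa := ae_dist_mul_eq_of_dist_add_eq hp (f := c t) (g := c s) (k := c a) (by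
    rw [dist_comm (c t) (c s), dist_comm (c s) (c a), dist_comm (c t) (c a), add_comm]
    exact hc.dist_add_dist_eq le_rfl hs.1 hst ht.2)
  filter_upwards [hatb, htsa] with x hxatb hxtsa
  rw [hc a (left_mem_Icc.2 hab.le) t ht, abs_of_pos (sub_pos.2 hat)] at hxatb
  rw [dist_comm (c t), hc a (left_mem_Icc.2 hab.le) t ht, dist_comm (c t), hc s hs t ht,
    abs_of_pos (sub_pos.2 hat), abs_of_nonneg (sub_nonneg.2 hst),
    dist_comm ((c t).1 x) ((c a).1 x)] at hxtsa
  rw [abs_of_nonneg (sub_nonneg.2 hst), dist_comm]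
  refine mul_left_cancel₀ (mul_pos (div_pos (sub_pos.2 hat) (sub_pos.2 hab)) hL).ne' ?_
  linear_combination hxtsa + (t - s) / (b - a) * hxatb

end NLp

section DistanceProportionalToParameter

variable {Y : Type*} [PseudoMetricSpace Y] {T : Set ℝ} {u : ℝ → Y} {k : ℝ}

theorem cauchySeq_comp_of_dist_eq_mul (hu : ∀ s ∈ T, ∀ t ∈ T, dist (u s) (u t) = |t - s| * k)
    {r : ℕ → ℝ} (hrT : ∀ n, r n ∈ T) (hr : CauchySeq r) : CauchySeq (u ∘ r) := by
  rw [cauchySeq_iff_tendsto_dist_atTop_0] at hr ⊢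
  have hdist : (fun n : ℕ × ℕ => dist ((u ∘ r) n.1) ((u ∘ r) n.2))
      = fun n => dist (r n.1) (r n.2) * k := by
    ext n
    rw [Function.comp_apply, Function.comp_apply, hu _ (hrT _) _ (hrT _), Real.dist_eq,
      abs_sub_comm]
  rw [hdist]
  simpa using hr.mul_const k

theorem dist_eq_mul_of_tendsto (hu : ∀ s ∈ T, ∀ t ∈ T, dist (u s) (u t) = |t - s| * k)
    {r r' : ℕ → ℝ} (hrT : ∀ n, r n ∈ T) (hr'T : ∀ n, r' n ∈ T) {s t : ℝ}
    (hrs : Tendsto r atTop (𝓝 s)) (hr't : Tendsto r' atTop (𝓝 t)) {ℓ ℓ' : Y}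
    (hℓ : Tendsto (u ∘ r) atTop (𝓝 ℓ)) (hℓ' : Tendsto (u ∘ r') atTop (𝓝 ℓ')) :
    dist ℓ ℓ' = |t - s| * k := by
  have hdist : (fun n => dist ((u ∘ r) n) ((u ∘ r') n)) = fun n => |r' n - r n| * k := by
    ext n
    exact hu _ (hrT n) _ (hr'T n)
  refine tendsto_nhds_unique (hℓ.dist hℓ') ?_
  rw [hdist]
  exact ((hr't.sub hrs).abs).mul_const k

end DistanceProportionalToParameter

def dyadicApprox (a b : ℝ) (n : ℕ) (t : ℝ) : ℝ :=
  a + (b - a) / 2 ^ n * ⌊(t - a) / ((b - a) / 2 ^ n)⌋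

section DyadicApprox

variable {a b : ℝ}

theorem dyadicApprox_le (hab : a < b) (n : ℕ) (t : ℝ) : dyadicApprox a b n t ≤ t := by
  have hδ : 0 < (b - a) / 2 ^ n := div_pos (sub_pos.2 hab) (by positivity)
  have := (le_div_iff₀ hδ).1 (Int.floor_le ((t - a) / ((b - a) / 2 ^ n)))
  rw [dyadicApprox]
  linarith

theorem sub_le_dyadicApprox (hab : a < b) (n : ℕ) (t : ℝ) :
    t - (b - a) / 2 ^ n ≤ dyadicApprox a b n t := by
  have hδ : 0 < (b - a) / 2 ^ n := div_pos (sub_pos.2 hab) (by positivity)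
  have := (div_lt_iff₀ hδ).1 (Int.lt_floor_add_one ((t - a) / ((b - a) / 2 ^ n)))
  rw [dyadicApprox]
  linarith

theorem dyadicApprox_mem_Icc (hab : a < b) (n : ℕ) {t : ℝ} (ht : t ∈ Icc a b) :
    dyadicApprox a b n t ∈ Icc a b := by
  have hδ : 0 < (b - a) / 2 ^ n := div_pos (sub_pos.2 hab) (by positivity)
  have hfloor : (0 : ℝ) ≤ ⌊(t - a) / ((b - a) / 2 ^ n)⌋ := by
    exact_mod_cast Int.floor_nonneg.2 (div_nonneg (sub_nonneg.2 ht.1) hδ.le)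
  refine ⟨?_, (dyadicApprox_le hab n t).trans ht.2⟩
  rw [dyadicApprox]
  linarith [mul_nonneg hδ.le hfloor]

theorem tendsto_dyadicApprox (hab : a < b) (t : ℝ) :
    Tendsto (fun n => dyadicApprox a b n t) atTop (𝓝 t) := by
  have hmesh : Tendsto (fun n : ℕ => t - (b - a) / 2 ^ n) atTop (𝓝 t) := by
    simpa using tendsto_const_nhds.sub
      ((tendsto_pow_atTop_atTop_of_one_lt (one_lt_two (α := ℝ))).const_div_atTop (b - a))
  exact tendsto_of_tendsto_of_tendsto_of_le_of_le hmesh tendsto_const_nhds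
    (sub_le_dyadicApprox hab · t) (dyadicApprox_le hab · t)

theorem countable_range_dyadicApprox (n : ℕ) : (range (dyadicApprox a b n)).Countable :=
  (countable_range fun k : ℤ => a + (b - a) / 2 ^ n * k).mono
    (range_comp_subset_range (fun t => ⌊(t - a) / ((b - a) / 2 ^ n)⌋)
      fun k : ℤ => a + (b - a) / 2 ^ n * k)

theorem stronglyMeasurable_uncurry_of_countable {ι X Y : Type*} [Countable ι]
    [MeasurableSpace ι] [MeasurableSingletonClass ι] [MeasurableSpace X] [TopologicalSpace Y]
    [PseudoMetrizableSpace Y] {f : ι → X → Y} (hf : ∀ i, StronglyMeasurable (f i)) :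
    StronglyMeasurable (Function.uncurry f) := by
  borelize Y
  refine stronglyMeasurable_iff_measurable_separable.2
    ⟨measurable_from_prod_countable_right fun i => (hf i).measurable, ?_⟩
  refine (isSeparable_iUnion.2 fun i => (hf i).isSeparable_range).mono ?_
  rintro _ ⟨⟨i, x⟩, rfl⟩
  exact mem_iUnion.2 ⟨i, x, rfl⟩

theorem stronglyMeasurable_comp_dyadicApprox {X Y : Type*} [MeasurableSpace X]
    [TopologicalSpace Y] [PseudoMetrizableSpace Y] {F : ℝ → X → Y}
    (hF : ∀ t, StronglyMeasurable (F t)) (n : ℕ) :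
    StronglyMeasurable fun pt : ℝ × X => F (dyadicApprox a b n pt.1) pt.2 :=
  (stronglyMeasurable_uncurry_of_countable fun k : ℤ => hF (a + (b - a) / 2 ^ n * k))
    |>.comp_measurable (((measurable_fst.sub_const a).div_const _).floor.prodMk measurable_snd)

end DyadicApprox

theorem exists_stronglyMeasurable_of_ae_dist_eq_mul {X : Type*} [MeasurableSpace X]
    {μ : Measure X} {Y : Type*} [MetricSpace Y] [CompleteSpace Y] {a b : ℝ} (hab : a < b)
    {F : ℝ → X → Y} (hF : ∀ t, StronglyMeasurable (F t)) {K : X → ℝ}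
    (hFK : ∀ s ∈ Icc a b, ∀ t ∈ Icc a b, ∀ᵐ x ∂μ, dist (F s x) (F t x) = |t - s| * K x) :
    ∃ F' : ℝ × X → Y, StronglyMeasurable F' ∧ (∀ t ∈ Icc a b, (fun x => F' (t, x)) =ᵐ[μ] F t) ∧
      ∀ᵐ x ∂μ, ∀ s ∈ Icc a b, ∀ t ∈ Icc a b, dist (F' (s, x)) (F' (t, x)) = |t - s| * K x := by
  rcases isEmpty_or_nonempty X with hX | ⟨⟨x₀⟩⟩
  · exact ⟨fun pt => F a pt.2, (hF a).comp_measurable measurable_snd,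
      fun _ _ => ae_of_all _ isEmptyElim, ae_of_all _ isEmptyElim⟩
  have : Nonempty Y := ⟨F a x₀⟩
  set D := Icc a b ∩ ⋃ n, range (dyadicApprox a b n)
  have hD : D.Countable := (countable_iUnion countable_range_dyadicApprox).mono inter_subset_right
  have hDmem : ∀ n, ∀ t ∈ Icc a b, dyadicApprox a b n t ∈ D :=
    fun n t ht => ⟨dyadicApprox_mem_Icc hab n ht, mem_iUnion.2 ⟨n, t, rfl⟩⟩
  have hgood : ∀ T ⊆ Icc a b, T.Countable →
      ∀ᵐ x ∂μ, ∀ s ∈ T, ∀ t ∈ T, dist (F s x) (F t x) = |t - s| * K x :=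
    fun T hT hTc => (ae_ball_iff hTc).2 fun s hs => (ae_ball_iff hTc).2 fun t ht =>
      hFK s (hT hs) t (hT ht)
  set F' : ℝ × X → Y := fun pt => limUnder atTop fun n => F (dyadicApprox a b n pt.1) pt.2
  have hlim : ∀ x, (∀ s ∈ D, ∀ t ∈ D, dist (F s x) (F t x) = |t - s| * K x) →
      ∀ t ∈ Icc a b, Tendsto (fun n => F (dyadicApprox a b n t) x) atTop (𝓝 (F' (t, x))) :=
    fun x hx t ht => tendsto_nhds_limUnder (cauchySeq_tendsto_of_complete
      (cauchySeq_comp_of_dist_eq_mul (u := (F · x)) hx (hDmem · t ht)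
        (tendsto_dyadicApprox hab t).cauchySeq))
  refine ⟨F', StronglyMeasurable.limUnder (stronglyMeasurable_comp_dyadicApprox hF),
    fun t ht => ?_, ?_⟩
  · filter_upwards [hgood (insert t D) (insert_subset ht inter_subset_left) (hD.insert t)]
      with x hx
    have hxD : ∀ s ∈ D, ∀ t ∈ D, dist (F s x) (F t x) = |t - s| * K x :=
      fun s hs t' ht' => hx s (mem_insert_of_mem _ hs) t' (mem_insert_of_mem _ ht')
    have hdist := dist_eq_mul_of_tendsto (u := (F · x)) hx
      (fun n => mem_insert_of_mem _ (hDmem n t ht)) (fun _ => mem_insert t D)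
      (tendsto_dyadicApprox hab t) tendsto_const_nhds (hlim x hxD t ht) tendsto_const_nhds
    rwa [sub_self, abs_zero, zero_mul, dist_eq_zero] at hdist
  · filter_upwards [hgood D inter_subset_left hD] with x hx s hs t ht
    exact dist_eq_mul_of_tendsto (u := (F · x)) hx (hDmem · s hs) (hDmem · t ht)
      (tendsto_dyadicApprox hab s) (tendsto_dyadicApprox hab t) (hlim x hx s hs) (hlim x hx t ht)

/-- Any constant speed geodesic `c : [a,b] → L^p_h(M,N)` (`N` complete, `1 < p < ∞`)
admits a jointly Borel measurable, separably valued `cHat : [a,b] × M → N` such that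
`x ↦ cHat(t,x)` represents `c t` for every `t ∈ [a,b]` and, for `μ`-a.e. `x`, the section
`t ↦ cHat(t,x)` is a constant speed geodesic in `N`. -/
theorem stmt13 {α : Type*} [MeasurableSpace α] {N : Type*} [MetricSpace N]
    [MeasurableSpace N] [BorelSpace N] [CompleteSpace N]
    (μ : Measure α) (h : α → N) (hh : SM h)
    (p a b : ℝ) (hp : 1 < p) (hab : a < b) [Fact (1 ≤ ENNReal.ofReal p)]
    (c : ℝ → NLp μ h hh (ENNReal.ofReal p))
    (hgeo : ∀ s ∈ Set.Icc a b, ∀ t ∈ Set.Icc a b,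
      dist (c s) (c t) = (|t - s| / (b - a)) * dist (c a) (c b)) :
    ∃ cHat : ℝ × α → N, Measurable cHat ∧ TopologicalSpace.IsSeparable (Set.range cHat) ∧
      (∀ t ∈ Set.Icc a b, (fun x => cHat (t, x)) =ᵐ[μ] (c t).1) ∧
      (∀ᵐ x ∂μ, ∀ s ∈ Set.Icc a b, ∀ t ∈ Set.Icc a b,
        dist (cHat (s, x)) (cHat (t, x))
          = (|t - s| / (b - a)) * dist (cHat (a, x)) (cHat (b, x))) := by
  obtain ⟨cHat, hcHat, hrep, hdist⟩ := exists_stronglyMeasurable_of_ae_dist_eq_mul hab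
    (fun t => (c t).stronglyMeasurable)
    (K := fun x => dist ((c a).1 x) ((c b).1 x) / (b - a)) fun s hs t ht =>
      (NLp.ae_dist_eq_of_isConstSpeedGeodesicOn hp hab hgeo hs ht).mono fun x hx => by
        rw [hx]; ring
  refine ⟨cHat, hcHat.measurable, hcHat.isSeparable_range, hrep, ?_⟩
  filter_upwards [hdist] with x hx s hs t ht
  rw [hx s hs t ht, hx a (left_mem_Icc.2 hab.le) b (right_mem_Icc.2 hab.le),
    abs_of_pos (sub_pos.2 hab)]
  field_simp

end NLS
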